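/- arXiv:0906.4505 — 9 statements merged into one kernel-verified Lean document; each statement's English description precedes it below -/
import Mathlib

section
/- Let A be a commutative ring and E a nonzero A-module. If the trivial ring extension R = A ⋉ E (idealization of E over A) is a valuation ring (i.e., its ideals are totally ordered by inclusion), then A is a valuation domain. -/
universe u

/-! The divisibility relations `inl a ∣ inl b` and `inl a ∣ inr e` in `A ⋉ E` project to
`a ∣ b` and to `e ∈ a • E`, while `inr e ∣ inl a` forces `a = 0`. Totality of divisibility
therefore makes divisibility in `A` total and every nonzero `a` act surjectively on `E`. If
`a b = 0` with `a, b ≠ 0`, a nonzero `e` could then be written `e = a • b • g = (a b) • g = 0`. -/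

theorem noZeroDivisors_of_smul_surjective {R : Type*} (M : Type*) [MonoidWithZero R] [Zero M]
    [MulActionWithZero R M] [Nontrivial M]
    (h : ∀ a : R, a ≠ 0 → Function.Surjective (a • · : M → M)) : NoZeroDivisors R where
  eq_zero_or_eq_zero_of_mul_eq_zero {a b} hab := by
    by_contra! hne
    obtain ⟨e, he⟩ := exists_ne (0 : M)
    obtain ⟨f, rfl⟩ := h a hne.1 e
    obtain ⟨g, rfl⟩ := h b hne.2 f
    exact he (by simp only [smul_smul, hab, zero_smul])

namespace TrivSqZeroExt

variable {R M : Type*} [MonoidWithZero R] [AddMonoid M] [DistribMulAction R M]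
  [DistribMulAction Rᵐᵒᵖ M] [SMulCommClass R Rᵐᵒᵖ M]

theorem fst_dvd_fst {x y : TrivSqZeroExt R M} (h : x ∣ y) : x.fst ∣ y.fst := by
  obtain ⟨c, rfl⟩ := h
  exact ⟨c.fst, fst_mul x c⟩

theorem exists_smul_eq_of_inl_dvd_inr {r : R} {m : M}
    (h : inl r ∣ (inr m : TrivSqZeroExt R M)) : ∃ n : M, r • n = m := by
  obtain ⟨c, hc⟩ := h
  exact ⟨c.snd, by simpa using (congrArg snd hc).symm⟩

theorem eq_zero_of_inr_dvd_inl {r : R} {m : M} (h : (inr m : TrivSqZeroExt R M) ∣ inl r) :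
    r = 0 := by
  simpa using fst_dvd_fst h

theorem dvd_total_fst (hdvd : ∀ x y : TrivSqZeroExt R M, x ∣ y ∨ y ∣ x) (a b : R) :
    a ∣ b ∨ b ∣ a := by
  simpa using (hdvd (inl a) (inl b)).imp fst_dvd_fst fst_dvd_fst

theorem smul_surjective_of_dvd_total (hdvd : ∀ x y : TrivSqZeroExt R M, x ∣ y ∨ y ∣ x)
    {r : R} (hr : r ≠ 0) : Function.Surjective (r • · : M → M) := fun m =>
  (hdvd (inl r) (inr m)).elim exists_smul_eq_of_inl_dvd_inr
    fun h => (hr (eq_zero_of_inr_dvd_inl h)).elim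

end TrivSqZeroExt

/-- If the trivial ring extension `R = A ⋉ E` of a commutative ring `A` by a nonzero
`A`-module `E` is a valuation ring (divisibility is total), then `A` is a valuation
domain: an integral domain in which divisibility is total. -/
theorem stmt0 (A : Type u) [CommRing A] (E : Type u) [AddCommGroup E] [Module A E]
    [Module Aᵐᵒᵖ E] [IsCentralScalar A E] [Nontrivial E]
    (hval : ∀ r s : TrivSqZeroExt A E, r ∣ s ∨ s ∣ r) :
    IsDomain A ∧ ∀ a b : A, a ∣ b ∨ b ∣ a := by
  have : Nontrivial A := Module.nontrivial A E
  have : NoZeroDivisors A := noZeroDivisors_of_smul_surjective E fun _ ha =>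
    TrivSqZeroExt.smul_surjective_of_dvd_total hval ha
  exact ⟨NoZeroDivisors.to_isDomain A, TrivSqZeroExt.dvd_total_fst hval⟩
end

section
/- Let A be a commutative ring and E a nonzero A-module. If the trivial ring extension R = A ⋉ E is a valuation ring, then E is a uniserial A-module, i.e., for every x, y ∈ E, x ∈ Ay or y ∈ Ax. -/
universe u

namespace TrivSqZeroExt

variable {R M : Type*} [CommSemiring R] [AddCommMonoid M] [Module R M] [Module Rᵐᵒᵖ M]
  [IsCentralScalar R M]

theorem inr_dvd_inr_iff {x y : M} : (inr x : TrivSqZeroExt R M) ∣ inr y ↔ ∃ a : R, a • x = y := by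
  constructor
  · rintro ⟨c, hc⟩
    refine ⟨c.fst, ?_⟩
    simpa [op_smul_eq_smul] using (congrArg snd hc).symm
  · rintro ⟨a, rfl⟩
    exact ⟨inl a, by rw [inr_mul_inl, op_smul_eq_smul]⟩

end TrivSqZeroExt

theorem stmt1_general (A : Type u) [CommRing A] (E : Type u) [AddCommGroup E] [Module A E]
    [Module Aᵐᵒᵖ E] [IsCentralScalar A E]
    (hval : ∀ r s : TrivSqZeroExt A E, r ∣ s ∨ s ∣ r) :
    ∀ x y : E, (∃ a : A, a • y = x) ∨ (∃ a : A, a • x = y) := by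
  intro x y
  rcases hval (.inr x) (.inr y) with h | h
  · exact .inr (TrivSqZeroExt.inr_dvd_inr_iff.mp h)
  · exact .inl (TrivSqZeroExt.inr_dvd_inr_iff.mp h)

/-- If the trivial ring extension `R = A ⋉ E` of a commutative ring `A` by a nonzero
`A`-module `E` is a valuation ring, then `E` is a uniserial `A`-module: for all
`x y : E`, `x ∈ A y` or `y ∈ A x`. -/
theorem stmt1 (A : Type u) [CommRing A] (E : Type u) [AddCommGroup E] [Module A E]
    [Module Aᵐᵒᵖ E] [IsCentralScalar A E] [Nontrivial E]
    (hval : ∀ r s : TrivSqZeroExt A E, r ∣ s ∨ s ∣ r) :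
    ∀ x y : E, (∃ a : A, a • y = x) ∨ (∃ a : A, a • x = y) :=
  stmt1_general A E hval
end

section
/- Let A be a valuation domain with field of fractions K. Then the trivial ring extension R = A ⋉ K is a valuation ring. -/
/-!
Write `r = (a, x)` and `s = (b, y)` with `a ∣ b`, say `b = a c`. If `a ≠ 0`, then `a` acts
invertibly on `K`, so `r (c, z) = s` for `z = (y - c x) / a`. If `a = 0`, then also `b = 0`,
and `(0, x)` and `(0, y)` are comparable because one of `y / x`, `x / y` lies in `A`.
-/

universe u

theorem ValuationRing.exists_smul_eq_or_exists_smul_eq {A K : Type*} [CommRing A] [IsDomain A]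
    [ValuationRing A] [Field K] [Algebra A K] [IsFractionRing A K] (x y : K) :
    (∃ c : A, c • x = y) ∨ ∃ c : A, c • y = x := by
  rcases eq_or_ne x 0 with rfl | hx
  · exact Or.inr ⟨0, zero_smul A y⟩
  rcases eq_or_ne y 0 with rfl | hy
  · exact Or.inl ⟨0, zero_smul A x⟩
  rcases ValuationRing.isInteger_or_isInteger A (y / x) with ⟨c, hc⟩ | ⟨c, hc⟩
  · exact Or.inl ⟨c, by rw [Algebra.smul_def, hc, div_mul_cancel₀ y hx]⟩
  · exact Or.inr ⟨c, by rw [Algebra.smul_def, hc, inv_div, div_mul_cancel₀ x hy]⟩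

theorem IsFractionRing.smul_surjective_of_ne_zero {A K : Type*} [CommRing A] [Field K]
    [Algebra A K] [IsFractionRing A K] {a : A} (ha : a ≠ 0) :
    Function.Surjective fun x : K => a • x := by
  have ha' : algebraMap A K a ≠ 0 :=
    (map_ne_zero_iff _ (IsFractionRing.injective A K)).2 ha
  exact fun y => ⟨(algebraMap A K a)⁻¹ * y, by simp [Algebra.smul_def, ha']⟩

namespace TrivSqZeroExt

variable {R M : Type*} [CommRing R] [AddCommGroup M] [Module R M] [Module Rᵐᵒᵖ M]
  [IsCentralScalar R M]

theorem dvd_of_fst_eq_zero {r s : TrivSqZeroExt R M} (hr : r.fst = 0) (hs : s.fst = 0)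
    (h : ∃ c : R, c • r.snd = s.snd) : r ∣ s := by
  obtain ⟨c, hc⟩ := h
  exact ⟨inl c, ext (by simp [hr, hs]) (by simp [hr, hc])⟩

theorem dvd_of_fst_dvd_of_smul_surjective {r s : TrivSqZeroExt R M} (h : r.fst ∣ s.fst)
    (hr : Function.Surjective fun m : M => r.fst • m) : r ∣ s := by
  obtain ⟨c, hc⟩ := h
  obtain ⟨z, hz⟩ := hr (s.snd - c • r.snd)
  refine ⟨inl c + inr z, ext (by simp [hc]) ?_⟩
  simp only at hz
  simp [hz]

variable {A K : Type*} [CommRing A] [IsDomain A] [ValuationRing A] [Field K] [Algebra A K]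
  [IsFractionRing A K] [Module Aᵐᵒᵖ K] [IsCentralScalar A K]

theorem dvd_or_dvd_of_fst_dvd {r s : TrivSqZeroExt A K} (h : r.fst ∣ s.fst) :
    r ∣ s ∨ s ∣ r := by
  by_cases hr : r.fst = 0
  · have hs : s.fst = 0 := zero_dvd_iff.1 (hr ▸ h)
    exact (ValuationRing.exists_smul_eq_or_exists_smul_eq r.snd s.snd).imp
      (dvd_of_fst_eq_zero hr hs) (dvd_of_fst_eq_zero hs hr)
  · exact Or.inl <| dvd_of_fst_dvd_of_smul_surjective h <|
      IsFractionRing.smul_surjective_of_ne_zero hr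

instance : PreValuationRing (TrivSqZeroExt A K) :=
  PreValuationRing.iff_dvd_total.2 ⟨fun r s =>
    (ValuationRing.dvd_total r.fst s.fst).elim dvd_or_dvd_of_fst_dvd
      fun h => (dvd_or_dvd_of_fst_dvd h).symm⟩

end TrivSqZeroExt

/-- If `A` is a valuation domain with field of fractions `K`, then the trivial ring
extension `R = A ⋉ K` is a valuation ring. -/
theorem stmt2 (A : Type u) [CommRing A] [IsDomain A]
    (hA : ∀ a b : A, a ∣ b ∨ b ∣ a) :
    ∀ r s : TrivSqZeroExt A (FractionRing A), r ∣ s ∨ s ∣ r := by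
  have : ValuationRing A := ValuationRing.iff_dvd_total.2 ⟨hA⟩
  exact ValuationRing.dvd_total
end

section
/- Let A be a commutative ring and E a nonzero A-module that is not torsion (i.e., there exists u ∈ E with annihilator (0:u) = 0). If the trivial ring extension R = A ⋉ E is a valuation ring, then A is a valuation domain and E is isomorphic as an A-module to the field of fractions K of A. -/
/-!
Comparing `(a, 0)`, `(0, e)` and `(0, u)` in the valuation ring `A ⋉ E` shows that divisibility
is total in `A`, that every `a ≠ 0` acts surjectively on `E`, and that any `e` and `u` are
related by `c • e = u` or `e = c • u`. Since `u` has zero annihilator, this makes `A` a domain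
and `E` torsion-free, and then `a ↦ a • u` exhibits `E` as the localization of `A` at its
nonzero elements, that is, as its field of fractions.
-/

universe u

open TrivSqZeroExt

theorem isLocalizedModule_toSpanSingleton {A E : Type*} [CommRing A] [AddCommGroup E]
    [Module A E] [Module.IsTorsionFree A E] {u : E} (hu : ∀ a : A, a • u = 0 → a = 0)
    (hdiv : ∀ s ∈ nonZeroDivisors A, ∀ e : E, ∃ g : E, s • g = e)
    (hspan : ∀ e : E, ∃ s ∈ nonZeroDivisors A, ∃ a : A, s • e = a • u) :
    IsLocalizedModule (nonZeroDivisors A) (LinearMap.toSpanSingleton A E u) where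
  map_units s := (Module.End.isUnit_iff _).mpr
    ⟨(isRegular_iff_mem_nonZeroDivisors.mpr s.2).isSMulRegular, fun e => hdiv s s.2 e⟩
  surj e := by
    obtain ⟨s, hs, a, h⟩ := hspan e
    exact ⟨⟨a, ⟨s, hs⟩⟩, h⟩
  exists_of_eq {a b} h := ⟨1, by
    rw [one_smul, one_smul, ← sub_eq_zero]
    exact hu _ (by simpa [sub_smul, sub_eq_zero] using h)⟩

namespace TrivSqZeroExt

variable {A E : Type*} [CommRing A] [AddCommGroup E] [Module A E] [Module Aᵐᵒᵖ E]
  [IsCentralScalar A E]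

theorem fst_dvd_fst_s3 {r s : TrivSqZeroExt A E} (h : r ∣ s) : r.fst ∣ s.fst :=
  map_dvd (fstHom A A E) h

theorem exists_smul_eq_of_inl_dvd_inr_s3 {a : A} {e : E} (h : inl a ∣ (inr e : TrivSqZeroExt A E)) :
    ∃ g : E, a • g = e := by
  obtain ⟨c, hc⟩ := h
  exact ⟨c.snd, by simpa using congrArg snd hc.symm⟩

theorem eq_zero_of_inr_dvd_inl_s3 {a : A} {e : E} (h : (inr e : TrivSqZeroExt A E) ∣ inl a) : a = 0 :=
  zero_dvd_iff.mp (fst_dvd_fst_s3 h)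

theorem exists_smul_eq_of_inr_dvd_inr {e f : E} (h : (inr e : TrivSqZeroExt A E) ∣ inr f) :
    ∃ c : A, c • e = f := by
  obtain ⟨c, hc⟩ := h
  exact ⟨c.fst, by simpa [op_smul_eq_smul] using congrArg snd hc.symm⟩

theorem dvd_total_of_dvd_total (hval : ∀ r s : TrivSqZeroExt A E, r ∣ s ∨ s ∣ r) (a b : A) :
    a ∣ b ∨ b ∣ a :=
  (hval (inl a) (inl b)).imp fst_dvd_fst_s3 fst_dvd_fst_s3

theorem exists_smul_eq_of_dvd_total (hval : ∀ r s : TrivSqZeroExt A E, r ∣ s ∨ s ∣ r) {a : A}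
    (ha : a ≠ 0) (e : E) : ∃ g : E, a • g = e :=
  (hval (inl a) (inr e)).elim exists_smul_eq_of_inl_dvd_inr_s3
    fun h => absurd (eq_zero_of_inr_dvd_inl_s3 h) ha

theorem noZeroDivisors_of_dvd_total (hval : ∀ r s : TrivSqZeroExt A E, r ∣ s ∨ s ∣ r) {u : E}
    (hu : ∀ a : A, a • u = 0 → a = 0) : NoZeroDivisors A where
  eq_zero_or_eq_zero_of_mul_eq_zero {a b} hab := by
    refine or_iff_not_imp_left.mpr fun ha => hu b ?_
    obtain ⟨g, rfl⟩ := exists_smul_eq_of_dvd_total hval ha u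
    rw [smul_smul, mul_comm, hab, zero_smul]

theorem isTorsionFree_of_dvd_total [IsDomain A] (hval : ∀ r s : TrivSqZeroExt A E, r ∣ s ∨ s ∣ r)
    {u : E} (hu : ∀ a : A, a • u = 0 → a = 0) : Module.IsTorsionFree A E := by
  refine .of_smul_eq_zero fun a e hae => ?_
  rcases hval (inr e) (inr u) with h | h
  · obtain ⟨c, rfl⟩ := exists_smul_eq_of_inr_dvd_inr h
    exact .inl (hu a (by rw [smul_comm, hae, smul_zero]))
  · obtain ⟨c, rfl⟩ := exists_smul_eq_of_inr_dvd_inr h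
    rw [smul_smul] at hae
    rcases mul_eq_zero.mp (hu _ hae) with ha | hc
    · exact .inl ha
    · exact .inr (by rw [hc, zero_smul])

theorem exists_mem_nonZeroDivisors_smul_eq_smul (hval : ∀ r s : TrivSqZeroExt A E, r ∣ s ∨ s ∣ r)
    {u : E} (hu : ∀ a : A, a • u = 0 → a = 0) (e : E) :
    ∃ s ∈ nonZeroDivisors A, ∃ a : A, s • e = a • u := by
  rcases hval (inr e) (inr u) with h | h
  · obtain ⟨c, hc⟩ := exists_smul_eq_of_inr_dvd_inr h
    refine ⟨c, mem_nonZeroDivisors_iff_right.mpr fun x hx => hu x ?_, 1, by rw [hc, one_smul]⟩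
    rw [← hc, smul_smul, hx, zero_smul]
  · obtain ⟨c, hc⟩ := exists_smul_eq_of_inr_dvd_inr h
    exact ⟨1, one_mem _, c, by rw [hc, one_smul]⟩

end TrivSqZeroExt

/-- Let `E` be a nonzero non-torsion module (some `u : E` has zero annihilator) over a
commutative ring `A`.  If the trivial ring extension `R = A ⋉ E` is a valuation ring,
then `A` is a valuation domain and `E` is isomorphic to the field of fractions of `A`. -/
theorem stmt3 (A : Type u) [CommRing A] (E : Type u) [AddCommGroup E] [Module A E]
    [Module Aᵐᵒᵖ E] [IsCentralScalar A E] [Nontrivial E]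
    (hnt : ∃ u : E, ∀ a : A, a • u = 0 → a = 0)
    (hval : ∀ r s : TrivSqZeroExt A E, r ∣ s ∨ s ∣ r) :
    IsDomain A ∧ (∀ a b : A, a ∣ b ∨ b ∣ a) ∧ Nonempty (E ≃ₗ[A] FractionRing A) := by
  obtain ⟨u, hu⟩ := hnt
  have : Nontrivial A := Module.nontrivial A E
  have : NoZeroDivisors A := noZeroDivisors_of_dvd_total hval hu
  have hdom : IsDomain A := NoZeroDivisors.to_isDomain A
  have : Module.IsTorsionFree A E := isTorsionFree_of_dvd_total hval hu
  have : IsLocalizedModule (nonZeroDivisors A) (LinearMap.toSpanSingleton A E u) :=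
    isLocalizedModule_toSpanSingleton hu
      (fun s hs => exists_smul_eq_of_dvd_total hval (nonZeroDivisors.ne_zero hs))
      (exists_mem_nonZeroDivisors_smul_eq_smul hval hu)
  exact ⟨hdom, dvd_total_of_dvd_total hval, ⟨IsLocalizedModule.linearEquiv (nonZeroDivisors A)
    (LinearMap.toSpanSingleton A E u) (Algebra.linearMap A (FractionRing A))⟩⟩
end

section
/- Let k be a field, A = k[[x]] the ring of formal power series, and K = k((x)) its field of fractions. Then the trivial ring extension A ⋉ K is a valuation ring. -/
noncomputable instance (k : Type) [Field k] :
    Module (PowerSeries k)ᵐᵒᵖ (LaurentSeries k) :=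
  Module.compHom (LaurentSeries k)
    ((algebraMap (PowerSeries k) (LaurentSeries k)).comp
      ((RingHom.id (PowerSeries k)).fromOpposite mul_comm))

instance (k : Type) [Field k] : IsCentralScalar (PowerSeries k) (LaurentSeries k) :=
  ⟨fun r m => by
    show (algebraMap (PowerSeries k) (LaurentSeries k)) r * m = r • m
    rw [Algebra.smul_def]⟩

/-!
In `A ⋉ M` one has `(a, m) (c, n) = (a c, a n + c m)`. Hence `(a, m) ∣ (b, n)` as soon as
`a ∣ b` and multiplication by `a` is surjective on `M`, or `a = b = 0` and `n ∈ A m`.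
For a valuation domain `A` with fraction field `K`, every nonzero `a` is invertible on `K`,
so the first case handles any pair in which one first coordinate is nonzero, and the second
case is the total ordering of the cyclic `A`-submodules of `K`.
-/

namespace TrivSqZeroExt

variable {R M : Type*} [CommRing R] [AddCommGroup M] [Module R M] [Module Rᵐᵒᵖ M]
  [IsCentralScalar R M]

theorem dvd_of_eq_smul {x y : TrivSqZeroExt R M} (c : R) (hfst : y.fst = x.fst * c)
    (hsnd : y.snd = c • x.snd) : x ∣ y :=
  ⟨inl c, by
    rw [mul_inl_eq_op_smul, op_smul_eq_smul]
    exact ext (hfst.trans (mul_comm _ _)) hsnd⟩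

theorem dvd_of_fst_dvd {x y : TrivSqZeroExt R M} (h : x.fst ∣ y.fst)
    (hx : Function.Surjective (x.fst • · : M → M)) : x ∣ y := by
  obtain ⟨c, hc⟩ := h
  obtain ⟨n, hn⟩ := hx (y.snd - c • x.snd)
  refine ⟨inl c + inr n, ext (by simp [hc]) ?_⟩
  simp only [snd_mul, fst_add, fst_inl, fst_inr, snd_add, snd_inl, snd_inr, add_zero, zero_add,
    op_smul_eq_smul]
  exact (sub_add_cancel _ _).symm.trans (congrArg (· + c • x.snd) hn.symm)

theorem preValuationRing [PreValuationRing R]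
    (hM : ∀ m n : M, ∃ c : R, c • m = n ∨ c • n = m)
    (hsurj : ∀ a : R, a ≠ 0 → Function.Surjective (a • · : M → M)) :
    PreValuationRing (TrivSqZeroExt R M) := by
  refine PreValuationRing.iff_dvd_total.mpr ⟨fun x y => ?_⟩
  by_cases hx : x.fst = 0
  · by_cases hy : y.fst = 0
    · obtain ⟨c, hc | hc⟩ := hM x.snd y.snd
      · exact .inl (dvd_of_eq_smul c (by rw [hx, hy, zero_mul]) hc.symm)
      · exact .inr (dvd_of_eq_smul c (by rw [hx, hy, zero_mul]) hc.symm)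
    · exact .inr (dvd_of_fst_dvd (hx ▸ dvd_zero _) (hsurj _ hy))
  · by_cases hy : y.fst = 0
    · exact .inl (dvd_of_fst_dvd (hy ▸ dvd_zero _) (hsurj _ hx))
    · obtain h | h := ValuationRing.dvd_total x.fst y.fst
      · exact .inl (dvd_of_fst_dvd h (hsurj _ hx))
      · exact .inr (dvd_of_fst_dvd h (hsurj _ hy))

end TrivSqZeroExt

section FractionField

variable {A K : Type*} [CommRing A] [Field K] [Algebra A K] [IsFractionRing A K]

theorem IsFractionRing.smul_surjective {a : A} (ha : a ≠ 0) :
    Function.Surjective (a • · : K → K) := by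
  have ha' : algebraMap A K a ≠ 0 := (map_ne_zero_iff _ (IsFractionRing.injective A K)).mpr ha
  intro y
  refine ⟨(algebraMap A K a)⁻¹ * y, ?_⟩
  simp only [Algebra.smul_def, mul_inv_cancel_left₀ ha']

theorem ValuationRing.exists_smul_eq_or_smul_eq [IsDomain A] [ValuationRing A] (m n : K) :
    ∃ c : A, c • m = n ∨ c • n = m := by
  by_cases hm : m = 0
  · exact ⟨0, .inr (by rw [zero_smul, hm])⟩
  obtain ⟨c, hc⟩ | ⟨c, hc⟩ := ValuationRing.isInteger_or_isInteger A (n / m)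
  · exact ⟨c, .inl (by rw [Algebra.smul_def, hc, div_mul_cancel₀ n hm])⟩
  · by_cases hn : n = 0
    · exact ⟨0, .inl (by rw [zero_smul, hn])⟩
    · exact ⟨c, .inr (by rw [Algebra.smul_def, hc, inv_div, div_mul_cancel₀ m hn])⟩

end FractionField

/-- For a field `k`, the trivial ring extension of the power series ring `A = k⟦x⟧`
by its field of fractions `K = k((x))` (the Laurent series field) is a valuation ring. -/
theorem stmt6 (k : Type) [Field k] :
    ∀ r s : TrivSqZeroExt (PowerSeries k) (LaurentSeries k), r ∣ s ∨ s ∣ r := by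
  have := TrivSqZeroExt.preValuationRing (R := PowerSeries k) (M := LaurentSeries k)
    ValuationRing.exists_smul_eq_or_smul_eq fun _ ha => IsFractionRing.smul_surjective ha
  exact ValuationRing.dvd_total
end

section
/- Let A be a valuation ring such that for every nonzero zero-divisor a of A, the annihilator ideal (0:a) is not finitely generated. Then every 2-presented A-module has projective dimension at most 1 (i.e., A is a (2,1)-ring). -/
/-!
Let `N ⊆ Aᵏ` be a finitely presented submodule, spanned by `g₀, …, gₘ`. Since divisibility in `A`
is total, some entry `a = (g_j)_i` divides every entry of every generator. Subtracting multiples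
of `g_j` from the other generators clears their `i`-th coordinates, and because `g_j = a • v` with
`v_i = 1` this splits `N = A g_j ⊕ N'` with `ann(g_j) = (0 : a)`. A direct summand of a finitely
presented module is finitely presented, so `(0 : a)` is finitely generated; by hypothesis `a` is
then zero or regular, i.e. `A g_j` is `0` or free, and induction on `m` shows that `N` is
projective. Applied to the first syzygy of a `2`-presented module, this gives projective
dimension at most `1`.
-/

universe u

/-- An `A`-module `M` is `n`-presented if it admits an exact sequence
`F_n → ⋯ → F_0 → M → 0` of finite free modules; equivalently (as defined here
recursively) it is finitely generated for `n = 0`, and for `n+1` there is a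
surjection from a finite free module whose kernel is `n`-presented. -/
def IsNPresented (A : Type u) [CommRing A] : ℕ → ∀ (M : Type u) [AddCommGroup M] [Module A M], Prop
  | 0, M, _, _ => Module.Finite A M
  | n + 1, M, _, _ => ∃ (k : ℕ) (f : (Fin k → A) →ₗ[A] M),
      Function.Surjective f ∧ IsNPresented A n (LinearMap.ker f)

/-- `ProjDimLE A d M` means the projective dimension of `M` over `A` is at most `d`:
`M` is projective for `d = 0`, and for `d+1` there is a surjection from a free
module whose kernel has projective dimension at most `d`. -/
def ProjDimLE (A : Type u) [CommRing A] : ℕ → ∀ (M : Type u) [AddCommGroup M] [Module A M], Prop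
  | 0, M, _, _ => Module.Projective A M
  | d + 1, M, _, _ => ∃ (ι : Type u) (f : (ι →₀ A) →ₗ[A] M),
      Function.Surjective f ∧ ProjDimLE A d (LinearMap.ker f)

open Module Submodule LinearMap

noncomputable def Submodule.prodEquivSupOfDisjoint {R M : Type*} [Ring R] [AddCommGroup M]
    [Module R M] {p q : Submodule R M} (h : Disjoint p q) : (p × q) ≃ₗ[R] ↥(p ⊔ q) :=
  (LinearEquiv.ofInjective (p.subtype.coprod q.subtype) <| by
      rw [← ker_eq_bot, ker_coprod_of_disjoint_range _ _ (by simpa using h), ker_subtype,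
        ker_subtype, prod_bot]).trans
    (LinearEquiv.ofEq _ _ (sup_eq_range p q).symm)

section FinitePresentationProd

variable {R M N : Type*} [CommRing R] [AddCommGroup M] [Module R M] [AddCommGroup N] [Module R N]

lemma Module.FinitePresentation.of_prod_left [FinitePresentation R (M × N)] :
    FinitePresentation R M :=
  finitePresentation_of_split_exact (inl R M N) (snd R M N) (inr R M N) (by ext; simp)
    inl_injective Function.Exact.inl_snd

lemma Module.FinitePresentation.of_prod_right [FinitePresentation R (M × N)] :
    FinitePresentation R N :=
  finitePresentation_of_split_exact (inr R M N) (fst R M N) (inl R M N) (by ext; simp)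
    inr_injective Function.Exact.inr_fst

end FinitePresentationProd

variable {A : Type u} [CommRing A]

lemma exists_dvd_forall_of_dvd_total (hval : ∀ a b : A, a ∣ b ∨ b ∣ a) {ι : Type*}
    [Finite ι] [Nonempty ι] (f : ι → A) : ∃ j, ∀ i, f j ∣ f i := by
  obtain ⟨j, -, hj⟩ := Set.finite_univ.exists_maximalFor (fun i => Ideal.span {f i}) Set.univ
    Set.univ_nonempty
  refine ⟨j, fun i => (hval (f j) (f i)).elim id fun h => ?_⟩
  rw [← Ideal.span_singleton_le_span_singleton] at h ⊢
  exact hj trivial h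

lemma eq_zero_or_ker_toSpanSingleton_eq_bot
    (hann : ∀ a : A, a ≠ 0 → (∃ b : A, b ≠ 0 ∧ a * b = 0) →
      ¬ (LinearMap.ker (LinearMap.toSpanSingleton A A a)).FG)
    {a : A} (hfg : (ker (toSpanSingleton A A a)).FG) :
    a = 0 ∨ ker (toSpanSingleton A A a) = ⊥ := by
  by_contra! h
  obtain ⟨b, hb, hb0⟩ := (Submodule.ne_bot_iff _).mp h.2
  rw [mem_ker, toSpanSingleton_apply, smul_eq_mul, mul_comm] at hb
  exact hann a h.1 ⟨b, hb0, hb⟩ hfg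

section Coordinates

variable {ι : Type*} {x : ι → A} {i : ι}

lemma smul_eq_zero_iff_mul_apply_eq_zero (hx : ∀ i', x i ∣ x i') (r : A) :
    r • x = 0 ↔ r * x i = 0 := by
  refine ⟨fun h => by simpa using congrFun h i, fun h => funext fun i' => ?_⟩
  obtain ⟨w, hw⟩ := hx i'
  simp [hw, ← mul_assoc, h]

lemma ker_toSpanSingleton_eq_of_forall_dvd (hx : ∀ i', x i ∣ x i') :
    ker (toSpanSingleton A (ι → A) x) = ker (toSpanSingleton A A (x i)) := by
  ext r
  simpa using smul_eq_zero_iff_mul_apply_eq_zero hx r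

lemma disjoint_span_singleton_of_forall_dvd (hx : ∀ i', x i ∣ x i') {N : Submodule A (ι → A)}
    (hN : N ≤ ker (LinearMap.proj i)) : Disjoint (A ∙ x) N := by
  rw [Submodule.disjoint_def]
  rintro _ hy hyN
  obtain ⟨r, rfl⟩ := mem_span_singleton.mp hy
  exact (smul_eq_zero_iff_mul_apply_eq_zero hx r).mpr (by simpa using hN hyN)

lemma projective_span_singleton_of_forall_dvd
    (hann : ∀ a : A, a ≠ 0 → (∃ b : A, b ≠ 0 ∧ a * b = 0) →
      ¬ (LinearMap.ker (LinearMap.toSpanSingleton A A a)).FG)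
    (hx : ∀ i', x i ∣ x i') [FinitePresentation A (A ∙ x)] : Projective A (A ∙ x) := by
  have hrange := LinearMap.span_singleton_eq_range A (ι → A) x
  have : FinitePresentation A (range (toSpanSingleton A (ι → A) x)) :=
    .of_equiv (LinearEquiv.ofEq _ _ hrange)
  have hfg := FinitePresentation.fg_ker _ (toSpanSingleton A (ι → A) x).surjective_rangeRestrict
  rw [ker_rangeRestrict, ker_toSpanSingleton_eq_of_forall_dvd hx] at hfg
  rcases eq_zero_or_ker_toSpanSingleton_eq_bot hann hfg with h | h
  · obtain rfl : x = 0 := funext fun i' => zero_dvd_iff.mp (h ▸ hx i')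
    rw [span_zero_singleton]
    infer_instance
  · rw [← ker_toSpanSingleton_eq_of_forall_dvd hx, ker_eq_bot] at h
    exact .of_equiv ((LinearEquiv.ofInjective _ h).trans (LinearEquiv.ofEq _ _ hrange.symm))

end Coordinates

lemma span_range_eq_span_singleton_sup {M : Type*} [AddCommGroup M] [Module A M] {m : ℕ}
    (g : Fin (m + 1) → M) (j : Fin (m + 1)) (c : Fin m → A) :
    span A (Set.range g) =
      (A ∙ g j) ⊔ span A (Set.range fun t => g (j.succAbove t) - c t • g j) := by
  refine le_antisymm (span_le.mpr ?_) (sup_le ?_ (span_le.mpr ?_))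
  · rintro _ ⟨t, rfl⟩
    rcases Fin.eq_self_or_eq_succAbove j t with rfl | ⟨t, rfl⟩
    · exact mem_sup_left (mem_span_singleton_self _)
    · rw [← sub_add_cancel (g (j.succAbove t)) (c t • g j)]
      exact add_mem (mem_sup_right (subset_span ⟨t, rfl⟩))
        (mem_sup_left (smul_mem _ _ (mem_span_singleton_self _)))
  · exact span_singleton_le_iff_mem _ _ |>.mpr (subset_span ⟨j, rfl⟩)
  · rintro _ ⟨t, rfl⟩
    exact sub_mem (subset_span ⟨_, rfl⟩) (smul_mem _ _ (subset_span ⟨j, rfl⟩))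

section ValuationRing

variable (hval : ∀ a b : A, a ∣ b ∨ b ∣ a)
  (hann : ∀ a : A, a ≠ 0 → (∃ b : A, b ≠ 0 ∧ a * b = 0) →
    ¬ (LinearMap.ker (LinearMap.toSpanSingleton A A a)).FG)
include hval hann

lemma projective_span_range_of_finitePresentation {ι : Type*} [Finite ι] :
    ∀ (m : ℕ) (g : Fin m → ι → A) [FinitePresentation A (span A (Set.range g))],
      Projective A (span A (Set.range g))
  | 0, g, _ => by
    rw [Set.range_eq_empty, span_empty]
    infer_instance
  | m + 1, g, _ => by
    cases isEmpty_or_nonempty ι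
    · infer_instance
    obtain ⟨⟨j, i⟩, hmin⟩ :=
      exists_dvd_forall_of_dvd_total hval fun p : Fin (m + 1) × ι => g p.1 p.2
    have hgj : ∀ i', g j i ∣ g j i' := fun i' => hmin (j, i')
    choose c hc using fun t => (hmin (j.succAbove t, i) : g j i ∣ g (j.succAbove t) i)
    set g' := fun t => g (j.succAbove t) - c t • g j
    have hrow : span A (Set.range g') ≤ ker (proj i) := by
      refine span_le.mpr ?_
      rintro _ ⟨t, rfl⟩
      simp [g', hc t, mul_comm]
    let e := (prodEquivSupOfDisjoint (disjoint_span_singleton_of_forall_dvd hgj hrow)).trans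
      (LinearEquiv.ofEq _ _ (span_range_eq_span_singleton_sup g j c).symm)
    have : FinitePresentation A ((A ∙ g j) × span A (Set.range g')) := .of_equiv e.symm
    have := FinitePresentation.of_prod_left (R := A) (M := A ∙ g j) (N := span A (Set.range g'))
    have := FinitePresentation.of_prod_right (R := A) (M := A ∙ g j) (N := span A (Set.range g'))
    have := projective_span_singleton_of_forall_dvd hann hgj
    have := projective_span_range_of_finitePresentation m g'
    exact .of_equiv e

lemma projective_of_finitePresentation {ι : Type*} [Finite ι] (N : Submodule A (ι → A))
    [FinitePresentation A N] : Projective A N := by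
  obtain ⟨m, g, rfl⟩ := fg_iff_exists_fin_generating_family.mp
    ((Module.Finite.iff_fg (N := N)).mp inferInstance)
  exact projective_span_range_of_finitePresentation hval hann m g

end ValuationRing

lemma IsNPresented.finitePresentation {M : Type u} [AddCommGroup M] [Module A M]
    (h : IsNPresented A 1 M) : FinitePresentation A M := by
  obtain ⟨k, f, hf, hker⟩ := h
  exact finitePresentation_of_surjective f hf (Module.Finite.iff_fg.mp hker)

lemma projDimLE_one_of_surjective {M : Type u} [AddCommGroup M] [Module A M] {k : ℕ}
    (f : (Fin k → A) →ₗ[A] M) (hf : Function.Surjective f) [Projective A (ker f)] :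
    ProjDimLE A 1 M := by
  let e : (ULift.{u} (Fin k) →₀ A) ≃ₗ[A] (Fin k → A) :=
    (Finsupp.linearEquivFunOnFinite A A _).trans (LinearEquiv.funCongrLeft A A Equiv.ulift).symm
  exact ⟨ULift.{u} (Fin k), f ∘ₗ e.toLinearMap, hf.comp e.surjective,
    .of_equiv (e.ofSubmodule' (ker f)).symm⟩

/-- Let `A` be a valuation ring such that for every nonzero zero-divisor `a`, the
annihilator `(0 : a)` is not a finitely generated ideal.  Then every `2`-presented
`A`-module has projective dimension at most `1`, i.e. `A` is a `(2,1)`-ring. -/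
theorem stmt10 (A : Type u) [CommRing A]
    (hval : ∀ a b : A, a ∣ b ∨ b ∣ a)
    (hann : ∀ a : A, a ≠ 0 → (∃ b : A, b ≠ 0 ∧ a * b = 0) →
      ¬ (LinearMap.ker (LinearMap.toSpanSingleton A A a)).FG) :
    ∀ (M : Type u) [AddCommGroup M] [Module A M], IsNPresented A 2 M → ProjDimLE A 1 M := by
  rintro M _ _ ⟨k, f, hf, hker⟩
  have := IsNPresented.finitePresentation hker
  have := projective_of_finitePresentation hval hann (ker f)
  exact projDimLE_one_of_surjective f hf
end

section
/- Let A be a valuation ring and suppose there exists a nonzero zero-divisor a ∈ A such that the annihilator (0:a) is a finitely generated ideal. Then the A-module A/aA is 2-presented and has infinite projective dimension; consequently A is not a (2,d)-ring for any nonnegative integer d. -/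
universe u

/-!
Since `A` is a valuation ring, the finitely generated ideal `(0 : a)` is principal, say `(b)`,
and then `(0 : b) = (a)`. Multiplication by `a` and by `b` give exact sequences
`0 → A/(b) → A → A/(a) → 0` and `0 → A/(a) → A → A/(b) → 0`, so by Schanuel's lemma
`pd A/(a) ≤ d + 1` forces `pd A/(b) ≤ d`, and symmetrically. Neither quotient is projective:
over the local ring `A` it would be free, yet it is nonzero and killed by a nonzero element.
The first sequence, with `(0 : a)` finitely generated, also shows that `A/(a)` is 2-presented.
-/

open LinearMap Function

noncomputable def Function.Exact.linearEquivKer {R K N P : Type*} [Ring R] [AddCommGroup K]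
    [Module R K] [AddCommGroup N] [Module R N] [AddCommGroup P] [Module R P]
    {i : K →ₗ[R] N} {p : N →ₗ[R] P} (hi : Injective i) (h : Exact i p) :
    K ≃ₗ[R] ker p :=
  (LinearEquiv.ofInjective i hi).trans (LinearEquiv.ofEq _ _ h.linearMap_ker_eq.symm)

/-- Schanuel's lemma. Both sides are identified with the pullback `{(p, q) | f p = g q}`,
by `(k, q) ↦ (k + β q, q)` and `(k', p) ↦ (p, k' + α p)`. -/
noncomputable def schanuelEquiv {R M P Q : Type*} [Ring R] [AddCommGroup M] [Module R M]
    [AddCommGroup P] [Module R P] [AddCommGroup Q] [Module R Q]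
    (f : P →ₗ[R] M) (g : Q →ₗ[R] M) (α : P →ₗ[R] Q) (β : Q →ₗ[R] P)
    (hα : ∀ x, g (α x) = f x) (hβ : ∀ y, f (β y) = g y) :
    (ker f × Q) ≃ₗ[R] (ker g × P) where
  toFun c := (⟨c.2 - α (c.1 + β c.2), by simp [hα, hβ]⟩, c.1 + β c.2)
  invFun c := (⟨c.2 - β (c.1 + α c.2), by simp [hα, hβ]⟩, c.1 + α c.2)
  map_add' x y := by ext <;> simp <;> abel
  map_smul' r x := by ext <;> simp [smul_sub]
  left_inv c := by ext <;> simp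
  right_inv c := by ext <;> simp

namespace ProjDimLE

variable {A : Type u} [CommRing A] {M N : Type u} [AddCommGroup M] [Module A M]
  [AddCommGroup N] [Module A N]

theorem of_linearEquiv {d : ℕ} (e : M ≃ₗ[A] N) (h : ProjDimLE A d M) : ProjDimLE A d N := by
  cases d with
  | zero =>
    have : Module.Projective A M := h
    exact Module.Projective.of_equiv e
  | succ d =>
    obtain ⟨ι, f, hf, hker⟩ := h
    exact ⟨ι, e ∘ₗ f, e.surjective.comp hf, by rwa [LinearEquiv.ker_comp]⟩

theorem succ_of_exact {d : ℕ} {K F : Type u} [AddCommGroup K] [Module A K] [AddCommGroup F]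
    [Module A F] [Module.Free A F] {i : K →ₗ[A] F} {p : F →ₗ[A] M} (hi : Injective i)
    (hip : Exact i p) (hp : Surjective p) (hK : ProjDimLE A d K) : ProjDimLE A (d + 1) M := by
  let e := (Module.Free.chooseBasis A F).repr
  have hex := (LinearEquiv.conj_exact_iff_exact i p e).mpr hip
  have hei : Injective (e.toLinearMap ∘ₗ i) := e.injective.comp hi
  exact ⟨_, p ∘ₗ e.symm, hp.comp e.symm.surjective,
    hK.of_linearEquiv (hex.linearEquivKer hei)⟩

theorem prod_free {d : ℕ} {G : Type u} [AddCommGroup G] [Module A G] [Module.Free A G]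
    (h : ProjDimLE A d M) : ProjDimLE A d (M × G) := by
  cases d with
  | zero =>
    have : Module.Projective A M := h
    exact (inferInstance : Module.Projective A (M × G))
  | succ d =>
    obtain ⟨ι, f, hf, hker⟩ := h
    refine succ_of_exact (i := inl A _ G ∘ₗ (ker f).subtype) (p := f.prodMap id)
      (inl_injective.comp Subtype.val_injective) ?_ (hf.prodMap surjective_id) hker
    rintro ⟨v, w⟩
    simp only [prodMap_apply, id_apply, Prod.mk_eq_zero]
    constructor
    · rintro ⟨hv, rfl⟩
      exact ⟨⟨v, hv⟩, rfl⟩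
    · rintro ⟨k, hk⟩
      obtain ⟨rfl, rfl⟩ := Prod.ext_iff.mp hk
      exact ⟨k.2, rfl⟩

theorem of_prod_free {d : ℕ} {G : Type u} [AddCommGroup G] [Module A G] [Module.Free A G]
    (h : ProjDimLE A d (M × G)) : ProjDimLE A d M := by
  cases d with
  | zero =>
    have : Module.Projective A (M × G) := h
    exact Module.Projective.of_split (inl A M G) (fst A M G) rfl
  | succ d =>
    obtain ⟨ι, f, hf, hker⟩ := h
    obtain ⟨s, hs⟩ := Module.projective_lifting_property f (inr A M G) hf
    have hs' (y : G) : f (s y) = (0, y) := LinearMap.congr_fun hs y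
    refine succ_of_exact (i := (ker f).subtype.coprod s) (p := fst A M G ∘ₗ f) ?_ ?_
      (Prod.fst_surjective.comp hf) hker.prod_free
    · refine (injective_iff_map_eq_zero _).mpr fun ⟨k, y⟩ h => ?_
      have hy : y = 0 := by simpa [hs', mem_ker.mp k.2] using congrArg (Prod.snd ∘ f) h
      subst hy
      simp only [coprod_apply, map_zero, add_zero, Submodule.subtype_apply] at h
      exact Prod.ext (Subtype.ext h) rfl
    · intro v
      constructor
      · intro hv
        refine ⟨(⟨v - s (f v).2, ?_⟩, (f v).2), by simp⟩
        ext
        · simpa [hs'] using hv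
        · simp [hs']
      · rintro ⟨⟨k, y⟩, rfl⟩
        simp [hs']

theorem of_exact {d : ℕ} {K F : Type u} [AddCommGroup K] [Module A K] [AddCommGroup F]
    [Module A F] [Module.Free A F] {i : K →ₗ[A] F} {p : F →ₗ[A] M} (hi : Injective i)
    (hip : Exact i p) (hp : Surjective p) (hM : ProjDimLE A (d + 1) M) : ProjDimLE A d K := by
  obtain ⟨ι, f, hf, hker⟩ := hM
  obtain ⟨α, hα⟩ := Module.projective_lifting_property p f hp
  obtain ⟨β, hβ⟩ := Module.projective_lifting_property f p hf
  have hpd := hker.prod_free (G := F) |>.of_linearEquiv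
    (schanuelEquiv f p α β (LinearMap.congr_fun hα) (LinearMap.congr_fun hβ))
  exact hpd.of_prod_free.of_linearEquiv (hip.linearEquivKer hi).symm

end ProjDimLE

namespace IsNPresented

variable {A : Type u} [CommRing A] {M N : Type u} [AddCommGroup M] [Module A M]
  [AddCommGroup N] [Module A N]

theorem of_linearEquiv {n : ℕ} (e : M ≃ₗ[A] N) (h : IsNPresented A n M) :
    IsNPresented A n N := by
  cases n with
  | zero =>
    have : Module.Finite A M := h
    exact Module.Finite.equiv e
  | succ n =>
    obtain ⟨k, f, hf, hker⟩ := h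
    exact ⟨k, e ∘ₗ f, e.surjective.comp hf, by rwa [LinearEquiv.ker_comp]⟩

theorem succ_of_exact {n : ℕ} {K F : Type u} [AddCommGroup K] [Module A K] [AddCommGroup F]
    [Module A F] [Module.Free A F] [Module.Finite A F] {i : K →ₗ[A] F} {p : F →ₗ[A] M}
    (hi : Injective i) (hip : Exact i p) (hp : Surjective p) (hK : IsNPresented A n K) :
    IsNPresented A (n + 1) M := by
  let e := ((Module.Free.chooseBasis A F).reindex (Fintype.equivFin _)).equivFun
  have hex := (LinearEquiv.conj_exact_iff_exact i p e).mpr hip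
  have hei : Injective (e.toLinearMap ∘ₗ i) := e.injective.comp hi
  exact ⟨_, p ∘ₗ e.symm, hp.comp e.symm.surjective,
    hK.of_linearEquiv (hex.linearEquivKer hei)⟩

end IsNPresented

section QuotientSpanSingleton

variable {A : Type u} [CommRing A]

theorem injective_liftQ_toSpanSingleton (a : A) :
    Injective ((ker (toSpanSingleton A A a)).liftQ (toSpanSingleton A A a) le_rfl) :=
  LinearMap.ker_eq_bot.mp (Submodule.ker_liftQ_eq_bot _ _ _ le_rfl)

theorem exact_liftQ_toSpanSingleton_mkQ (a : A) :
    Exact ((ker (toSpanSingleton A A a)).liftQ (toSpanSingleton A A a) le_rfl)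
      (Ideal.span {a}).mkQ := by
  rw [LinearMap.exact_iff, Submodule.ker_mkQ, Submodule.range_liftQ,
    ← LinearMap.span_singleton_eq_range, Ideal.submodule_span_eq]

theorem isNPresented_two_quotient_span_singleton {a : A} (h : (ker (toSpanSingleton A A a)).FG) :
    IsNPresented A 2 (A ⧸ Ideal.span {a}) := by
  refine IsNPresented.succ_of_exact (injective_liftQ_toSpanSingleton a)
    (exact_liftQ_toSpanSingleton_mkQ a) (Submodule.mkQ_surjective _) ?_
  refine IsNPresented.succ_of_exact (Submodule.injective_subtype _)
    (LinearMap.exact_subtype_mkQ _) (Submodule.mkQ_surjective _) ?_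
  exact Module.Finite.iff_fg.mpr h

theorem ProjDimLE.of_quotient_span_singleton {a b : A} {d : ℕ}
    (hab : ker (toSpanSingleton A A a) = Ideal.span {b})
    (h : ProjDimLE A (d + 1) (A ⧸ Ideal.span {a})) : ProjDimLE A d (A ⧸ Ideal.span {b}) := by
  rw [← hab]
  exact h.of_exact (injective_liftQ_toSpanSingleton a) (exact_liftQ_toSpanSingleton_mkQ a)
    (Submodule.mkQ_surjective _)

theorem not_projective_quotient_span_singleton [IsLocalRing A] {x : A} (hx : x ≠ 0)
    (hxu : ¬IsUnit x) : ¬Module.Projective A (A ⧸ Ideal.span {x}) := by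
  intro
  have : Nontrivial (A ⧸ Ideal.span {x}) :=
    Ideal.Quotient.nontrivial_iff.mpr (mt Ideal.span_singleton_eq_top.mp hxu)
  have := Module.free_of_flat_of_isLocalRing (R := A) (P := A ⧸ Ideal.span {x})
  refine hx (FaithfulSMul.eq_of_smul_eq_smul (α := A ⧸ Ideal.span {x}) fun m => ?_)
  obtain ⟨r, rfl⟩ := Ideal.Quotient.mk_surjective m
  rw [Algebra.smul_def, Ideal.Quotient.algebraMap_eq, ← map_mul, zero_smul,
    Ideal.Quotient.eq_zero_iff_mem]
  exact Ideal.mul_mem_right _ _ (Ideal.mem_span_singleton_self x)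

theorem not_projDimLE_quotient_span_singleton [IsLocalRing A] {a b : A} (ha : a ≠ 0)
    (hb : b ≠ 0) (hab : ker (toSpanSingleton A A a) = Ideal.span {b})
    (hba : ker (toSpanSingleton A A b) = Ideal.span {a}) (d : ℕ) :
    ¬ProjDimLE A d (A ⧸ Ideal.span {a}) := by
  induction d generalizing a b with
  | zero =>
    have hba0 : b * a = 0 := hab.ge (Ideal.mem_span_singleton_self b)
    exact not_projective_quotient_span_singleton ha fun hu => hb (hu.mul_left_eq_zero.mp hba0)
  | succ d ih => exact fun h => ih hb ha hba hab (h.of_quotient_span_singleton hab)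

end QuotientSpanSingleton

section PreValuationRing

variable {A : Type u} [CommRing A] [PreValuationRing A]

theorem PreValuationRing.isPrincipal_of_fg {I : Ideal A} (hI : I.FG) : I.IsPrincipal := by
  refine Submodule.fg_induction (motive := fun I _ => I.IsPrincipal) (fun x => ⟨x, rfl⟩) ?_ I hI
  rintro _ _ _ _ ⟨c₁, rfl⟩ ⟨c₂, rfl⟩
  rcases ValuationRing.dvd_total c₁ c₂ with h | h
  · exact ⟨c₁, sup_eq_left.mpr (Ideal.span_singleton_le_span_singleton.mpr h)⟩
  · exact ⟨c₂, sup_eq_right.mpr (Ideal.span_singleton_le_span_singleton.mpr h)⟩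

theorem ker_toSpanSingleton_eq_span_symm {a b : A} (ha : a ≠ 0) (hb : b ≠ 0)
    (hab : ker (toSpanSingleton A A a) = Ideal.span {b}) :
    ker (toSpanSingleton A A b) = Ideal.span {a} := by
  have : Nontrivial A := nontrivial_of_ne b 0 hb
  refine le_antisymm (fun c (hc : c * b = 0) => ?_) ?_
  · rw [Ideal.mem_span_singleton]
    obtain hac | ⟨d, rfl⟩ := ValuationRing.dvd_total a c
    · exact hac
    by_cases hd : IsUnit d
    · exact hd.mul_right_dvd.mpr dvd_rfl
    -- `a = c d` with `d` a non-unit; `b ∣ d` would give `a = 0`, and `b = d e` puts `e` in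
    -- `(0 : a) = (d e)`, so that `e = 0`.
    obtain ⟨e, rfl⟩ | ⟨g, rfl⟩ := ValuationRing.dvd_total d b
    · have he : e ∈ Ideal.span {d * e} := hab ▸ (show e * (c * d) = 0 by linear_combination hc)
      obtain ⟨f, hf⟩ := Ideal.mem_span_singleton.mp he
      have hu : IsUnit (1 - d * f) :=
        (IsLocalRing.isUnit_or_isUnit_one_sub_self (d * f)).resolve_left
          (hd ∘ isUnit_of_mul_isUnit_left)
      have he0 : e = 0 := hu.mul_left_eq_zero.mp (by linear_combination hf)
      exact absurd (by rw [he0, mul_zero]) hb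
    · exact absurd (by rw [← mul_assoc, hc, zero_mul]) ha
  · rw [Ideal.span_le, Set.singleton_subset_iff]
    exact (mul_comm a b).trans (hab.ge (Ideal.mem_span_singleton_self b))

end PreValuationRing

/-- Let `A` be a valuation ring having a nonzero zero-divisor `a` whose annihilator
is a finitely generated ideal.  Then `A/aA` is `2`-presented with infinite projective
dimension; consequently `A` is not a `(2,d)`-ring for any `d`. -/
theorem stmt11 (A : Type u) [CommRing A]
    (hval : ∀ a b : A, a ∣ b ∨ b ∣ a)
    (a : A) (ha : a ≠ 0) (hzd : ∃ b : A, b ≠ 0 ∧ a * b = 0)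
    (hfg : (LinearMap.ker (LinearMap.toSpanSingleton A A a)).FG) :
    IsNPresented A 2 (A ⧸ Ideal.span {a}) ∧
      (¬ ∃ d : ℕ, ProjDimLE A d (A ⧸ Ideal.span {a})) ∧
      ∀ d : ℕ, ¬ ∀ (M : Type u) [AddCommGroup M] [Module A M],
        IsNPresented A 2 M → ProjDimLE A d M := by
  have : PreValuationRing A := PreValuationRing.iff_dvd_total.mpr ⟨hval⟩
  have : Nontrivial A := nontrivial_of_ne a 0 ha
  obtain ⟨b, hab⟩ := (PreValuationRing.isPrincipal_of_fg hfg).principal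
  have hb : b ≠ 0 := by
    rintro rfl
    obtain ⟨c, hc, hac⟩ := hzd
    have hcmem : c ∈ ker (toSpanSingleton A A a) := (mul_comm c a).trans hac
    rw [hab, Submodule.span_singleton_eq_bot.mpr rfl] at hcmem
    exact hc hcmem
  have hinf := not_projDimLE_quotient_span_singleton ha hb hab
    (ker_toSpanSingleton_eq_span_symm ha hb hab)
  have hpres := isNPresented_two_quotient_span_singleton hfg
  exact ⟨hpres, fun ⟨d, hd⟩ => hinf d hd, fun d hall => hinf d (hall _ hpres)⟩
end

section
/- Let A be a valuation ring with nonzero zero-divisor a such that (0:a) = bA is principal, and (0:b) = cA is principal. Then (0:c) = bA. -/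
/-!
Since `b * a = 0`, the element `a` lies in `(0 : b) = cA`, so `c ∣ a` and hence
`(0 : c) ⊆ (0 : a) = bA`. Conversely `c * b = 0`, so `bA ⊆ (0 : c)`.
-/

universe u

namespace LinearMap

variable {A : Type u} [CommRing A]

theorem mem_ker_toSpanSingleton_self_iff {x y : A} :
    x ∈ ker (toSpanSingleton A A y) ↔ x * y = 0 := by
  rw [mem_ker, toSpanSingleton_apply, smul_eq_mul]

theorem mem_ker_toSpanSingleton_comm {x y : A} :
    x ∈ ker (toSpanSingleton A A y) ↔ y ∈ ker (toSpanSingleton A A x) := by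
  simp only [mem_ker_toSpanSingleton_self_iff, mul_comm]

theorem ker_toSpanSingleton_le_of_dvd {x y : A} (h : x ∣ y) :
    ker (toSpanSingleton A A x) ≤ ker (toSpanSingleton A A y) := by
  obtain ⟨d, rfl⟩ := h
  intro z hz
  rw [mem_ker_toSpanSingleton_self_iff] at hz ⊢
  rw [← mul_assoc, hz, zero_mul]

end LinearMap

theorem stmt12_general (A : Type u) [CommRing A]
    (a b c : A)
    (hb : LinearMap.ker (LinearMap.toSpanSingleton A A a) = Ideal.span {b})
    (hc : LinearMap.ker (LinearMap.toSpanSingleton A A b) = Ideal.span {c}) :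
    LinearMap.ker (LinearMap.toSpanSingleton A A c) = Ideal.span {b} := by
  have hbc : b ∈ LinearMap.ker (LinearMap.toSpanSingleton A A c) :=
    LinearMap.mem_ker_toSpanSingleton_comm.mp (hc ▸ Ideal.mem_span_singleton_self c)
  have hca : c ∣ a := by
    rw [← Ideal.mem_span_singleton, ← hc, LinearMap.mem_ker_toSpanSingleton_comm, hb]
    exact Ideal.mem_span_singleton_self b
  exact le_antisymm (hb ▸ LinearMap.ker_toSpanSingleton_le_of_dvd hca)
    ((Ideal.span_singleton_le_iff_mem _).mpr hbc)

/-- Let `A` be a valuation ring with a nonzero zero-divisor `a` such that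
`(0 : a) = bA` and `(0 : b) = cA`.  Then `(0 : c) = bA`. -/
theorem stmt12 (A : Type u) [CommRing A]
    (hval : ∀ a b : A, a ∣ b ∨ b ∣ a)
    (a b c : A) (ha : a ≠ 0) (hzd : ∃ t : A, t ≠ 0 ∧ a * t = 0)
    (hb : LinearMap.ker (LinearMap.toSpanSingleton A A a) = Ideal.span {b})
    (hc : LinearMap.ker (LinearMap.toSpanSingleton A A b) = Ideal.span {c}) :
    LinearMap.ker (LinearMap.toSpanSingleton A A c) = Ideal.span {b} :=
  stmt12_general A a b c hb hc
end

section
/- Let p be a prime and n ≥ 2 a positive integer. Then ℤ/p^nℤ is a valuation ring which is not a (2,d)-ring for any nonnegative integer d; in particular the module (ℤ/p^nℤ)/(p^{n-1}) has infinite projective dimension over ℤ/p^nℤ. -/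
universe u

/-! Multiplication by `t = p` and by `s = p^(n-1)` form an exact pair of zero divisors in
`R = ℤ/p^nℤ`: each annihilator is the ideal generated by the other. The property
"`s • x = 0` implies `x ∈ t • M`" holds for free modules, passes to direct summands, and
passes from `F` and the kernel `K` (with the roles of `s` and `t` swapped) to the cokernel of
`K → F`; so by induction on `d` every module of projective dimension `≤ d` has it, for both
orders of the pair. In `R ⧸ (s)` the class of `1` is killed by `s`, but it lies in `t • (R ⧸ (s))`
only if `1 ∈ (s, t) = (p)`. Divisibility in `R` is total because `a` and `gcd(a, p^n)`, a power
of `p`, generate the same ideal. Since `R ⧸ (s)` is finitely presented over the noetherian ring `R`,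
it is `2`-presented. -/

section SMulExact

variable {R : Type u} [CommRing R]

/-- Exactness of `M --t•--> M --s•--> M` in the middle. -/
def SMulExact (s t : R) (M : Type*) [AddCommGroup M] [Module R M] : Prop :=
  ∀ x : M, s • x = 0 → ∃ y : M, t • y = x

variable {s t : R}

theorem SMulExact.finsupp (h : SMulExact s t R) (ι : Type*) : SMulExact s t (ι →₀ R) := by
  intro x hx
  suffices x ∈ LinearMap.range (LinearMap.lsmul R (ι →₀ R) t) by simpa using this
  rw [← Finsupp.sum_single x]
  refine Submodule.finsuppSum_mem _ _ _ _ fun i _ => ?_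
  obtain ⟨y, hy⟩ := h (x i) (by simpa using congrArg (· i) hx)
  exact ⟨Finsupp.single i y, by simp [← hy]⟩

theorem SMulExact.of_leftInverse {M N : Type*} [AddCommGroup M] [Module R M] [AddCommGroup N]
    [Module R N] {i : M →ₗ[R] N} {r : N →ₗ[R] M} (hri : Function.LeftInverse r i)
    (h : SMulExact s t N) : SMulExact s t M := by
  intro x hx
  obtain ⟨y, hy⟩ := h (i x) (by rw [← map_smul, hx, map_zero])
  exact ⟨r y, by rw [← map_smul, hy, hri]⟩

theorem SMulExact.of_projective (h : SMulExact s t R) (P : Type*) [AddCommGroup P] [Module R P]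
    [Module.Projective R P] : SMulExact s t P :=
  have ⟨_, hsec⟩ := Module.projective_def.mp ‹_›
  (h.finsupp P).of_leftInverse hsec

theorem SMulExact.of_surjective {F M : Type*} [AddCommGroup F] [Module R F] [AddCommGroup M]
    [Module R M] {f : F →ₗ[R] M} (hf : Function.Surjective f) (hts : t * s = 0)
    (hF : SMulExact s t F) (hK : SMulExact t s (LinearMap.ker f)) : SMulExact s t M := by
  intro x hx
  obtain ⟨u, rfl⟩ := hf x
  have hsu : s • u ∈ LinearMap.ker f := by rw [LinearMap.mem_ker, map_smul, hx]
  obtain ⟨k, hk⟩ := hK ⟨s • u, hsu⟩ (Subtype.ext (by simp [smul_smul, hts]))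
  obtain ⟨w, hw⟩ := hF (u - k) (by rw [smul_sub, ← Submodule.coe_smul, hk, sub_self])
  refine ⟨f w, ?_⟩
  rw [← map_smul, hw, map_sub, LinearMap.mem_ker.mp k.2, sub_zero]

theorem SMulExact.of_projDimLE (hst : SMulExact s t R) (hts : SMulExact t s R) (h0 : s * t = 0) :
    ∀ (d : ℕ) (M : Type u) [AddCommGroup M] [Module R M],
      ProjDimLE R d M → SMulExact s t M ∧ SMulExact t s M
  | 0, M, _, _, hM => by
    have : Module.Projective R M := hM
    exact ⟨hst.of_projective M, hts.of_projective M⟩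
  | d + 1, M, _, _, ⟨ι, f, hf, hK⟩ => by
    obtain ⟨hK₁, hK₂⟩ := SMulExact.of_projDimLE hst hts h0 d _ hK
    exact ⟨(hst.finsupp ι).of_surjective hf (by rw [mul_comm, h0]) hK₂,
      (hts.finsupp ι).of_surjective hf h0 hK₁⟩

theorem not_smulExact_quotient (hts : t ∣ s) (ht : ¬ IsUnit t) :
    ¬ SMulExact s t (R ⧸ Ideal.span {s}) := by
  intro h
  have hs : s • (1 : R ⧸ Ideal.span {s}) = 0 := by
    rw [Algebra.smul_def, mul_one, Ideal.Quotient.algebraMap_eq, Ideal.Quotient.eq_zero_iff_mem]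
    exact Ideal.mem_span_singleton_self s
  obtain ⟨y, hy⟩ := h 1 hs
  obtain ⟨c, rfl⟩ := Ideal.Quotient.mk_surjective y
  rw [Algebra.smul_def, Ideal.Quotient.algebraMap_eq, ← map_mul, ← map_one (Ideal.Quotient.mk _),
    Ideal.Quotient.eq, Ideal.mem_span_singleton] at hy
  have hdvd : t ∣ t * c - 1 := hts.trans hy
  exact ht (isUnit_of_dvd_one ((dvd_sub_right (dvd_mul_right t c)).mp hdvd))

end SMulExact

theorem IsNPresented.of_isNoetherianRing {A : Type u} [CommRing A] [IsNoetherianRing A] :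
    ∀ (n : ℕ) (M : Type u) [AddCommGroup M] [Module A M] [Module.Finite A M], IsNPresented A n M
  | 0, _, _, _, h => h
  | n + 1, M, _, _, _ => by
    obtain ⟨k, f, hf⟩ := Module.Finite.exists_fin' A M
    exact ⟨k, f, hf, IsNPresented.of_isNoetherianRing n _⟩

namespace ZMod

theorem smulExact_of_mul_eq {m k l : ℕ} (hk : k ≠ 0) (hm : k * l = m) :
    SMulExact (k : ZMod m) (l : ZMod m) (ZMod m) := by
  intro x hx
  obtain ⟨X, rfl⟩ := intCast_surjective x
  have hdvd : (k : ℤ) * l ∣ k * X := by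
    rw [smul_eq_mul, ← Int.cast_natCast, ← Int.cast_mul, intCast_zmod_eq_zero_iff_dvd] at hx
    exact_mod_cast hm ▸ hx
  obtain ⟨c, rfl⟩ := (mul_dvd_mul_iff_left (by exact_mod_cast hk)).mp hdvd
  exact ⟨c, by push_cast; rfl⟩

theorem intCast_dvd_intCast_of_gcd_dvd {m : ℕ} {a b : ℤ} (h : (Int.gcd a m : ℤ) ∣ b) :
    (a : ZMod m) ∣ (b : ZMod m) := by
  obtain ⟨w, rfl⟩ := h
  refine ⟨Int.gcdA a m * w, ?_⟩
  rw [Int.gcd_eq_gcd_ab]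
  push_cast
  rw [natCast_self]
  ring

theorem dvd_total_of_prime_pow {p n : ℕ} (hp : p.Prime) (a b : ZMod (p ^ n)) : a ∣ b ∨ b ∣ a := by
  obtain ⟨A, rfl⟩ := intCast_surjective a
  obtain ⟨B, rfl⟩ := intCast_surjective b
  obtain ⟨i, -, hi⟩ := (Nat.dvd_prime_pow hp).mp (Int.gcd_dvd_natAbs_right A (p ^ n : ℕ))
  obtain ⟨j, -, hj⟩ := (Nat.dvd_prime_pow hp).mp (Int.gcd_dvd_natAbs_right B (p ^ n : ℕ))
  have hA : ((p ^ i : ℕ) : ℤ) ∣ A := hi ▸ Int.gcd_dvd_left A _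
  have hB : ((p ^ j : ℕ) : ℤ) ∣ B := hj ▸ Int.gcd_dvd_left B _
  rcases le_total i j with hij | hji
  · exact .inl (intCast_dvd_intCast_of_gcd_dvd
      (hi ▸ (Int.natCast_dvd_natCast.mpr (pow_dvd_pow p hij)).trans hB))
  · exact .inr (intCast_dvd_intCast_of_gcd_dvd
      (hj ▸ (Int.natCast_dvd_natCast.mpr (pow_dvd_pow p hji)).trans hA))

end ZMod

/-- For a prime `p` and `n ≥ 2`, `ℤ/p^nℤ` is a valuation ring which is not a
`(2,d)`-ring for any `d`; in particular `(ℤ/p^nℤ)/(p^(n-1))` has infinite projective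
dimension. -/
theorem stmt16 (p n : ℕ) (hp : p.Prime) (hn : 2 ≤ n) :
    (∀ a b : ZMod (p ^ n), a ∣ b ∨ b ∣ a) ∧
      (¬ ∃ d : ℕ, ProjDimLE (ZMod (p ^ n)) d
        (ZMod (p ^ n) ⧸ Ideal.span {((p : ZMod (p ^ n)) ^ (n - 1))})) ∧
      ∀ d : ℕ, ¬ ∀ (M : Type) [AddCommGroup M] [Module (ZMod (p ^ n)) M],
        IsNPresented (ZMod (p ^ n)) 2 M → ProjDimLE (ZMod (p ^ n)) d M := by
  have hpn : p ^ (n - 1) * p = p ^ n := by rw [← pow_succ, Nat.sub_add_cancel (by omega)]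
  have hst : SMulExact ((p : ZMod (p ^ n)) ^ (n - 1)) (p : ZMod (p ^ n)) (ZMod (p ^ n)) := by
    exact_mod_cast ZMod.smulExact_of_mul_eq (pow_ne_zero _ hp.ne_zero) hpn
  have hts : SMulExact (p : ZMod (p ^ n)) ((p : ZMod (p ^ n)) ^ (n - 1)) (ZMod (p ^ n)) := by
    exact_mod_cast ZMod.smulExact_of_mul_eq hp.ne_zero ((mul_comm _ _).trans hpn)
  have h0 : (p : ZMod (p ^ n)) ^ (n - 1) * p = 0 := by
    rw [← Nat.cast_pow, ← Nat.cast_mul, hpn, ZMod.natCast_self]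
  have hnot_unit : ¬ IsUnit (p : ZMod (p ^ n)) := by
    rw [ZMod.isUnit_prime_iff_not_dvd hp, not_not]
    exact dvd_pow_self p (by omega)
  have hinfinite (d : ℕ) : ¬ ProjDimLE (ZMod (p ^ n)) d
      (ZMod (p ^ n) ⧸ Ideal.span {((p : ZMod (p ^ n)) ^ (n - 1))}) := fun hd =>
    not_smulExact_quotient (dvd_pow_self _ (by omega)) hnot_unit
      (SMulExact.of_projDimLE hst hts h0 d _ hd).1
  have : NeZero (p ^ n) := ⟨pow_ne_zero _ hp.ne_zero⟩
  exact ⟨ZMod.dvd_total_of_prime_pow hp, fun ⟨d, hd⟩ => hinfinite d hd,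
    fun d h => hinfinite d (h _ (IsNPresented.of_isNoetherianRing 2 _))⟩
end
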